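/- For every t ≥ 0 one has δ ∫_ℝ (∂_x u(x,t))² dx ≤ 2c ‖u₀‖²_{L²(ℝ)} + δ ‖u₀'‖²_{L²(ℝ)}, where c = sup |f'| (estimate (2.5c) of Theorem 2.1 in squared form). -/

import Mathlib

open MeasureTheory Filter Set

namespace Stmt5Aux

noncomputable def gg (u : ℝ → ℝ → ℝ) : ℝ × ℝ → ℝ := fun p => u p.1 p.2

noncomputable def Dn (u : ℝ → ℝ → ℝ) : ℕ → ℝ × ℝ → ℝ
  | 0 => gg u
  | (n+1) => fun p => fderiv ℝ (Dn u n) p (0, 1)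

noncomputable def E1 (u : ℝ → ℝ → ℝ) : ℝ × ℝ → ℝ := fun p => fderiv ℝ (gg u) p (1, 0)

noncomputable def Dt1 (u : ℝ → ℝ → ℝ) : ℝ × ℝ → ℝ := fun p => fderiv ℝ (E1 u) p (0, 1)

noncomputable def Fi (f : ℝ → ℝ) : ℝ → ℝ := fun v => ∫ s in (0:ℝ)..v, (f s - f 0)

variable {u : ℝ → ℝ → ℝ} {f : ℝ → ℝ}

/-- slice in second variable -/
lemma hasDerivAt_slice_snd {w : ℝ × ℝ → ℝ} (hw : Differentiable ℝ w) (t x : ℝ) :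
    HasDerivAt (fun y => w (t, y)) (fderiv ℝ w (t, x) (0, 1)) x := by
  have h := (hw (t, x)).hasFDerivAt
  have hline : HasDerivAt (fun y : ℝ => ((t, y) : ℝ × ℝ)) ((0 : ℝ), (1 : ℝ)) x :=
    (hasDerivAt_const x t).prodMk (hasDerivAt_id x)
  exact h.comp_hasDerivAt x hline

lemma hasDerivAt_slice_fst {w : ℝ × ℝ → ℝ} (hw : Differentiable ℝ w) (t x : ℝ) :
    HasDerivAt (fun s => w (s, x)) (fderiv ℝ w (t, x) (1, 0)) t := by
  have h := (hw (t, x)).hasFDerivAt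
  have hline : HasDerivAt (fun s : ℝ => ((s, x) : ℝ × ℝ)) ((1 : ℝ), (0 : ℝ)) t :=
    (hasDerivAt_id t).prodMk (hasDerivAt_const t x)
  exact h.comp_hasDerivAt t hline

lemma Dn_contDiff (hu : ContDiff ℝ (⊤ : ℕ∞) (gg u)) : ∀ n, ContDiff ℝ (⊤ : ℕ∞) (Dn u n) := by
  intro n
  induction n with
  | zero => exact hu
  | succ n ih =>
    have h1 : ContDiff ℝ (⊤ : ℕ∞) (fun p => fderiv ℝ (Dn u n) p) := ih.fderiv_right (by simp)
    exact (ContinuousLinearMap.apply ℝ ℝ ((0:ℝ), (1:ℝ))).contDiff.comp h1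

lemma E1_contDiff (hu : ContDiff ℝ (⊤ : ℕ∞) (gg u)) : ContDiff ℝ (⊤ : ℕ∞) (E1 u) :=
  (ContinuousLinearMap.apply ℝ ℝ ((1:ℝ), (0:ℝ))).contDiff.comp (hu.fderiv_right (by simp))

lemma Dn_succ_slice (hu : ContDiff ℝ (⊤ : ℕ∞) (gg u)) (n : ℕ) (t x : ℝ) :
    HasDerivAt (fun y => Dn u n (t, y)) (Dn u (n+1) (t, x)) x :=
  hasDerivAt_slice_snd ((Dn_contDiff hu n).differentiable (by simp)) t x

lemma iteratedDeriv_eq_Dn (hu : ContDiff ℝ (⊤ : ℕ∞) (gg u)) (n : ℕ) (t x : ℝ) :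
    iteratedDeriv n (u t) x = Dn u n (t, x) := by
  induction n generalizing x with
  | zero => simp [Dn, gg]
  | succ n ih =>
    rw [iteratedDeriv_succ]
    have : iteratedDeriv n (u t) = fun y => Dn u n (t, y) := funext fun y => ih y
    rw [this]
    exact (Dn_succ_slice hu n t x).deriv

lemma hasDerivAt_time_g (hu : ContDiff ℝ (⊤ : ℕ∞) (gg u)) (t x : ℝ) :
    HasDerivAt (fun s => u s x) (E1 u (t, x)) t :=
  hasDerivAt_slice_fst (hu.differentiable (by simp)) t x

/-- Clairaut: the time derivative of `u_x` is `Dt1`. -/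
lemma hasDerivAt_time_D1 (hu : ContDiff ℝ (⊤ : ℕ∞) (gg u)) (t x : ℝ) :
    HasDerivAt (fun s => Dn u 1 (s, x)) (Dt1 u (t, x)) t := by
  set H := fderiv ℝ (fderiv ℝ (gg u)) (t, x) with hH
  have hfd : ContDiff ℝ (⊤ : ℕ∞) (fun p => fderiv ℝ (gg u) p) := hu.fderiv_right (by simp)
  have ha : HasFDerivAt (fun p => fderiv ℝ (gg u) p) H (t, x) :=
    (hfd.differentiable (by simp) (t, x)).hasFDerivAt
  -- derivative of s ↦ fderiv g (s,x) is H (1,0)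
  have hline : HasDerivAt (fun s : ℝ => ((s, x) : ℝ × ℝ)) ((1 : ℝ), (0 : ℝ)) t :=
    (hasDerivAt_id t).prodMk (hasDerivAt_const t x)
  have hb : HasDerivAt (fun s => fderiv ℝ (gg u) (s, x)) (H (1, 0)) t :=
    ha.comp_hasDerivAt t hline
  have hc : HasDerivAt (fun s => fderiv ℝ (gg u) (s, x) (0, 1)) (H (1, 0) (0, 1)) t :=
    ((ContinuousLinearMap.apply ℝ ℝ ((0:ℝ), (1:ℝ))).hasFDerivAt.comp_hasDerivAt t hb)
  have hsym : H (1, 0) (0, 1) = H (0, 1) (1, 0) :=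
    second_derivative_symmetric (fun y => (hu.differentiable (by simp) y).hasFDerivAt) ha (1, 0) (0, 1)
  -- identify Dt1 with H (0,1) (1,0)
  have hE1 : HasFDerivAt (E1 u)
      ((ContinuousLinearMap.apply ℝ ℝ ((1:ℝ), (0:ℝ))).comp H) (t, x) :=
    (ContinuousLinearMap.apply ℝ ℝ ((1:ℝ), (0:ℝ))).hasFDerivAt.comp (t, x) ha
  have hDt1 : Dt1 u (t, x) = H (0, 1) (1, 0) := by
    have := hE1.fderiv
    simp only [Dt1, this]
    rfl
  have : HasDerivAt (fun s => Dn u 1 (s, x)) (H (1, 0) (0, 1)) t := hc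
  rwa [hsym, ← hDt1] at this

end Stmt5Aux
section TestP2
open MeasureTheory Filter Set Stmt5Aux
variable {u : ℝ → ℝ → ℝ} {f : ℝ → ℝ} {ε δ : ℝ}

namespace Stmt5Aux

lemma hasDerivAt_f_comp (hf : ContDiff ℝ (⊤ : ℕ∞) f) (hu : ContDiff ℝ (⊤ : ℕ∞) (gg u)) (t x : ℝ) :
    HasDerivAt (fun y => f (u t y)) (deriv f (gg u (t, x)) * Dn u 1 (t, x)) x := by
  have h1 : HasDerivAt (fun y => gg u (t, y)) (Dn u 1 (t, x)) x := Dn_succ_slice hu 0 t x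
  have h2 : HasDerivAt f (deriv f (gg u (t, x))) (gg u (t, x)) :=
    ((hf.differentiable (by simp)) (gg u (t, x))).hasDerivAt
  exact h2.comp x h1

lemma pde_E1 (hf : ContDiff ℝ (⊤ : ℕ∞) f) (hu : ContDiff ℝ (⊤ : ℕ∞) (gg u))
    (hpde : ∀ t ≥ (0:ℝ), ∀ x : ℝ,
      deriv (fun s => u s x) t + deriv (fun y => f (u t y)) x
        = ε * iteratedDeriv 2 (u t) x + δ * iteratedDeriv 3 (u t) x)
    {s : ℝ} (hs : 0 ≤ s) (x : ℝ) :
    E1 u (s, x) = -(deriv f (gg u (s, x)) * Dn u 1 (s, x))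
      + ε * Dn u 2 (s, x) + δ * Dn u 3 (s, x) := by
  have h := hpde s hs x
  rw [(hasDerivAt_time_g hu s x).deriv, (hasDerivAt_f_comp hf hu s x).deriv,
    iteratedDeriv_eq_Dn hu 2 s x, iteratedDeriv_eq_Dn hu 3 s x] at h
  linarith

lemma hasDerivAt_x_E1 (hf : ContDiff ℝ (⊤ : ℕ∞) f) (hu : ContDiff ℝ (⊤ : ℕ∞) (gg u))
    (hpde : ∀ t ≥ (0:ℝ), ∀ x : ℝ,
      deriv (fun s => u s x) t + deriv (fun y => f (u t y)) x
        = ε * iteratedDeriv 2 (u t) x + δ * iteratedDeriv 3 (u t) x)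
    {s : ℝ} (hs : 0 ≤ s) (x : ℝ) :
    HasDerivAt (fun y => E1 u (s, y))
      (-(deriv (deriv f) (gg u (s, x)) * (Dn u 1 (s, x))^2
          + deriv f (gg u (s, x)) * Dn u 2 (s, x))
        + ε * Dn u 3 (s, x) + δ * Dn u 4 (s, x)) x := by
  have hfun : (fun y => E1 u (s, y)) = fun y =>
      -(deriv f (gg u (s, y)) * Dn u 1 (s, y)) + ε * Dn u 2 (s, y) + δ * Dn u 3 (s, y) :=
    funext fun y => pde_E1 hf hu hpde hs y
  rw [hfun]
  have h0 : HasDerivAt (fun y => gg u (s, y)) (Dn u 1 (s, x)) x := Dn_succ_slice hu 0 s x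
  have h1 : HasDerivAt (fun y => Dn u 1 (s, y)) (Dn u 2 (s, x)) x := Dn_succ_slice hu 1 s x
  have h2 : HasDerivAt (fun y => Dn u 2 (s, y)) (Dn u 3 (s, x)) x := Dn_succ_slice hu 2 s x
  have h3 : HasDerivAt (fun y => Dn u 3 (s, y)) (Dn u 4 (s, x)) x := Dn_succ_slice hu 3 s x
  have hdf : HasDerivAt (fun y => deriv f (gg u (s, y)))
      (deriv (deriv f) (gg u (s, x)) * Dn u 1 (s, x)) x := by
    have hdc : ContDiff ℝ ((⊤ : ℕ∞) : WithTop ℕ∞) (deriv f) := by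
      simpa using ContDiff.iterate_deriv 1 (hf.of_le (by simp))
    exact ((hdc.differentiable (by simp) _).hasDerivAt).comp x h0
  have := ((hdf.mul h1).neg.add ((h2.const_mul ε))).add (h3.const_mul δ)
  exact this.congr_deriv (by ring)

/-- value of `Dt1` on `s ≥ 0` via the PDE -/
lemma Dt1_eq (hf : ContDiff ℝ (⊤ : ℕ∞) f) (hu : ContDiff ℝ (⊤ : ℕ∞) (gg u))
    (hpde : ∀ t ≥ (0:ℝ), ∀ x : ℝ,
      deriv (fun s => u s x) t + deriv (fun y => f (u t y)) x
        = ε * iteratedDeriv 2 (u t) x + δ * iteratedDeriv 3 (u t) x)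
    {s : ℝ} (hs : 0 ≤ s) (x : ℝ) :
    Dt1 u (s, x) = -(deriv (deriv f) (gg u (s, x)) * (Dn u 1 (s, x))^2
          + deriv f (gg u (s, x)) * Dn u 2 (s, x))
        + ε * Dn u 3 (s, x) + δ * Dn u 4 (s, x) := by
  have ha : HasDerivAt (fun y => E1 u (s, y)) (Dt1 u (s, x)) x :=
    hasDerivAt_slice_snd ((E1_contDiff hu).differentiable (by simp)) s x
  exact ha.unique (hasDerivAt_x_E1 hf hu hpde hs x)

end Stmt5Aux
end TestP2
namespace Stmt5Aux
open MeasureTheory Filter Set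
variable {u : ℝ → ℝ → ℝ} {f : ℝ → ℝ} {ε δ c : ℝ}

noncomputable def en (f : ℝ → ℝ) (c δ : ℝ) (u : ℝ → ℝ → ℝ) (s x : ℝ) : ℝ :=
  δ/2 * (Dn u 1 (s,x))^2 + Fi f (gg u (s,x)) + c/2 * (gg u (s,x))^2

noncomputable def eT (f : ℝ → ℝ) (c δ : ℝ) (u : ℝ → ℝ → ℝ) (s x : ℝ) : ℝ :=
  δ * Dn u 1 (s,x) * Dt1 u (s,x) + (f (gg u (s,x)) - f 0 + c * gg u (s,x)) * E1 u (s,x)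

noncomputable def Dd (f : ℝ → ℝ) (c ε δ : ℝ) (u : ℝ → ℝ → ℝ) (s x : ℝ) : ℝ :=
  ε*δ*(Dn u 2 (s,x))^2 + ε*(deriv f (gg u (s,x)) + c)*(Dn u 1 (s,x))^2

noncomputable def JJ (f : ℝ → ℝ) (c ε δ : ℝ) (u : ℝ → ℝ → ℝ) (s x : ℝ) : ℝ :=
  -(δ * deriv f (gg u (s,x)) * (Dn u 1 (s,x))^2) + ε*δ*Dn u 1 (s,x)*Dn u 2 (s,x)
  + δ^2 * Dn u 1 (s,x) * Dn u 3 (s,x) - δ^2/2*(Dn u 2 (s,x))^2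
  - (f (gg u (s,x)) - f 0)^2/2 + ε*(f (gg u (s,x)) - f 0)*Dn u 1 (s,x)
  + δ*(f (gg u (s,x)) - f 0)*Dn u 2 (s,x)
  - c*(gg u (s,x)*(f (gg u (s,x)) - f 0) - Fi f (gg u (s,x)))
  + c*ε*gg u (s,x)*Dn u 1 (s,x) + c*δ*gg u (s,x)*Dn u 2 (s,x) - c*δ/2*(Dn u 1 (s,x))^2

lemma hasDerivAt_Fi (hf : Continuous f) (v : ℝ) : HasDerivAt (Fi f) (f v - f 0) v :=
  intervalIntegral.integral_hasDerivAt_right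
    ((hf.sub continuous_const).intervalIntegrable _ _)
    ((hf.sub continuous_const).stronglyMeasurableAtFilter _ _)
    (hf.sub continuous_const).continuousAt

/-- time derivative of the energy density -/
lemma hasDerivAt_time_en (hf : ContDiff ℝ (⊤ : ℕ∞) f) (hu : ContDiff ℝ (⊤ : ℕ∞) (gg u)) (s x : ℝ) :
    HasDerivAt (fun σ => en f c δ u σ x) (eT f c δ u s x) s := by
  have h1t : HasDerivAt (fun σ => Dn u 1 (σ, x)) (Dt1 u (s, x)) s := hasDerivAt_time_D1 hu s x
  have hgt : HasDerivAt (fun σ => gg u (σ, x)) (E1 u (s, x)) s :=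
    hasDerivAt_slice_fst (hu.differentiable (by simp)) s x
  have hFit : HasDerivAt (fun σ => Fi f (gg u (σ, x)))
      ((f (gg u (s, x)) - f 0) * E1 u (s, x)) s :=
    (hasDerivAt_Fi hf.continuous _).comp s hgt
  have H := (((h1t.pow 2).const_mul (δ/2)).add hFit).add ((hgt.pow 2).const_mul (c/2))
  have hfun : (fun σ => en f c δ u σ x) = fun σ =>
      δ/2 * (Dn u 1 (σ,x))^2 + Fi f (gg u (σ,x)) + c/2 * (gg u (σ,x))^2 := rfl
  rw [hfun]
  refine H.congr_deriv ?_
  unfold eT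
  ring

/-- spatial derivative of the flux equals `eT + Dd`, for `s ≥ 0` -/
lemma hasDerivAt_x_JJ (hf : ContDiff ℝ (⊤ : ℕ∞) f) (hu : ContDiff ℝ (⊤ : ℕ∞) (gg u))
    (hpde : ∀ t ≥ (0:ℝ), ∀ x : ℝ,
      deriv (fun s => u s x) t + deriv (fun y => f (u t y)) x
        = ε * iteratedDeriv 2 (u t) x + δ * iteratedDeriv 3 (u t) x)
    {s : ℝ} (hs : 0 ≤ s) (x : ℝ) :
    HasDerivAt (fun y => JJ f c ε δ u s y) (eT f c δ u s x + Dd f c ε δ u s x) x := by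
  have h0 : HasDerivAt (fun y => gg u (s, y)) (Dn u 1 (s, x)) x := Dn_succ_slice hu 0 s x
  have h1 : HasDerivAt (fun y => Dn u 1 (s, y)) (Dn u 2 (s, x)) x := Dn_succ_slice hu 1 s x
  have h2 : HasDerivAt (fun y => Dn u 2 (s, y)) (Dn u 3 (s, x)) x := Dn_succ_slice hu 2 s x
  have h3 : HasDerivAt (fun y => Dn u 3 (s, y)) (Dn u 4 (s, x)) x := Dn_succ_slice hu 3 s x
  have hdf : HasDerivAt (fun y => deriv f (gg u (s, y)))
      (deriv (deriv f) (gg u (s, x)) * Dn u 1 (s, x)) x := by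
    have hdc : ContDiff ℝ ((⊤ : ℕ∞) : WithTop ℕ∞) (deriv f) := by
      simpa using ContDiff.iterate_deriv 1 (hf.of_le (by simp))
    exact ((hdc.differentiable (by simp) _).hasDerivAt).comp x h0
  have hW : HasDerivAt (fun y => f (gg u (s, y)) - f 0)
      (deriv f (gg u (s, x)) * Dn u 1 (s, x)) x :=
    (hasDerivAt_f_comp hf hu s x).sub_const (f 0)
  have hFig : HasDerivAt (fun y => Fi f (gg u (s, y)))
      ((f (gg u (s, x)) - f 0) * Dn u 1 (s, x)) x :=
    (hasDerivAt_Fi hf.continuous _).comp x h0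
  have t1 := ((hdf.const_mul δ).mul (h1.pow 2)).neg
  have t2 := (h1.const_mul (ε*δ)).mul h2
  have t3 := (h1.const_mul (δ^2)).mul h3
  have t4 := (h2.pow 2).const_mul (δ^2/2)
  have t5 := (hW.pow 2).div_const 2
  have t6 := (hW.const_mul ε).mul h1
  have t7 := (hW.const_mul δ).mul h2
  have t8 := ((h0.mul hW).sub hFig).const_mul c
  have t9 := (h0.const_mul (c*ε)).mul h1
  have t10 := (h0.const_mul (c*δ)).mul h2
  have t11 := (h1.pow 2).const_mul (c*δ/2)
  have H := ((((((((((t1.add t2).add t3).sub t4).sub t5).add t6).add t7).sub t8).add t9).add t10).sub t11)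
  have hfun : (fun y => JJ f c ε δ u s y) = fun y =>
      -(δ * deriv f (gg u (s,y)) * (Dn u 1 (s,y))^2) + ε*δ*Dn u 1 (s,y)*Dn u 2 (s,y)
      + δ^2 * Dn u 1 (s,y) * Dn u 3 (s,y) - δ^2/2*(Dn u 2 (s,y))^2
      - (f (gg u (s,y)) - f 0)^2/2 + ε*(f (gg u (s,y)) - f 0)*Dn u 1 (s,y)
      + δ*(f (gg u (s,y)) - f 0)*Dn u 2 (s,y)
      - c*(gg u (s,y)*(f (gg u (s,y)) - f 0) - Fi f (gg u (s,y)))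
      + c*ε*gg u (s,y)*Dn u 1 (s,y) + c*δ*gg u (s,y)*Dn u 2 (s,y)
      - c*δ/2*(Dn u 1 (s,y))^2 := rfl
  rw [hfun]
  refine H.congr_deriv ?_
  rw [show eT f c δ u s x = δ * Dn u 1 (s,x) * Dt1 u (s,x)
      + (f (gg u (s,x)) - f 0 + c * gg u (s,x)) * E1 u (s,x) from rfl,
    Dt1_eq hf hu hpde hs x, pde_E1 hf hu hpde hs x]
  unfold Dd
  simp only [Pi.pow_apply]
  ring

end Stmt5Aux
namespace Stmt5Aux
open MeasureTheory Filter Set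
variable {u : ℝ → ℝ → ℝ} {f : ℝ → ℝ} {ε δ c : ℝ}

lemma Dt1_contDiff (hu : ContDiff ℝ (⊤ : ℕ∞) (gg u)) : ContDiff ℝ (⊤ : ℕ∞) (Dt1 u) :=
  (ContinuousLinearMap.apply ℝ ℝ ((0:ℝ), (1:ℝ))).contDiff.comp
    ((E1_contDiff hu).fderiv_right (by simp))

/-- decay bounds for the spatial derivatives -/
lemma Dn_decay (hu : ContDiff ℝ (⊤ : ℕ∞) (gg u))
    (hdecay : ∀ (n m : ℕ) (T : ℝ), ∃ C : ℝ, ∀ t ∈ Set.Icc (0:ℝ) T, ∀ x : ℝ,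
      |x| ^ m * |iteratedDeriv n (u t) x| ≤ C)
    (n : ℕ) (T : ℝ) :
    ∃ C : ℝ, 0 ≤ C ∧ ∀ s ∈ Set.Icc (0:ℝ) T, ∀ x : ℝ,
      |Dn u n (s, x)| ≤ C ∧ |Dn u n (s, x)| ≤ C / (1 + x^2) := by
  obtain ⟨C₀, h₀⟩ := hdecay n 0 T
  obtain ⟨C₂, h₂⟩ := hdecay n 2 T
  refine ⟨|C₀| + |C₂|, by positivity, fun s hs x => ?_⟩
  have e0 := h₀ s hs x
  have e2 := h₂ s hs x
  rw [pow_zero, one_mul] at e0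
  rw [iteratedDeriv_eq_Dn hu n s x] at e0 e2
  have hx2 : x ^ 2 * |Dn u n (s, x)| ≤ |C₂| := by
    calc x ^ 2 * |Dn u n (s, x)| = |x| ^ 2 * |Dn u n (s, x)| := by rw [sq_abs]
    _ ≤ C₂ := e2
    _ ≤ |C₂| := le_abs_self _
  have h1 : |Dn u n (s, x)| ≤ |C₀| + |C₂| := by
    have := e0.trans (le_abs_self C₀); linarith [abs_nonneg C₂]
  constructor
  · exact h1
  · rw [le_div_iff₀ (by positivity : (0:ℝ) < 1 + x^2)]
    have : |Dn u n (s, x)| * (1 + x ^ 2) = |Dn u n (s, x)| + x ^ 2 * |Dn u n (s, x)| := by ring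
    rw [this]
    have h0' : |Dn u n (s, x)| ≤ |C₀| := e0.trans (le_abs_self _)
    linarith

lemma abs_f_sub_le (hf : ContDiff ℝ (⊤ : ℕ∞) f) (hc : ∀ v : ℝ, |deriv f v| ≤ c) (a b : ℝ) :
    |f a - f b| ≤ c * |a - b| := by
  have H := Convex.norm_image_sub_le_of_norm_deriv_le (f := f) (s := Set.univ)
    (fun x _ => (hf.differentiable (by simp)) x)
    (fun x _ => by rw [Real.norm_eq_abs]; exact hc x) convex_univ (mem_univ b) (mem_univ a)
  simpa [Real.norm_eq_abs] using H

lemma abs_Fi_le (hf : ContDiff ℝ (⊤ : ℕ∞) f) (hc : ∀ v : ℝ, |deriv f v| ≤ c) (v : ℝ) :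
    |Fi f v| ≤ c / 2 * v ^ 2 := by
  have hcont : Continuous fun s : ℝ => f s - f 0 := hf.continuous.sub continuous_const
  have hb : ∀ s : ℝ, abs (f s - f 0) ≤ c * |s| := by
    intro s; simpa using abs_f_sub_le hf hc s 0
  have key : |∫ s in (0:ℝ)..v, abs (f s - f 0)| ≤ c / 2 * v ^ 2 := by
    rcases le_total 0 v with hv | hv
    · rw [abs_of_nonneg (intervalIntegral.integral_nonneg hv (fun s _ => abs_nonneg _))]
      calc ∫ s in (0:ℝ)..v, abs (f s - f 0)
          ≤ ∫ s in (0:ℝ)..v, c * s := by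
            apply intervalIntegral.integral_mono_on hv
              (hcont.abs.intervalIntegrable _ _)
              ((continuous_const.mul continuous_id).intervalIntegrable _ _)
            intro s hs
            calc abs (f s - f 0) ≤ c * |s| := hb s
            _ = c * s := by rw [abs_of_nonneg hs.1]
        _ = c / 2 * v ^ 2 := by
            rw [intervalIntegral.integral_const_mul, integral_id]; ring
    · have hsymm : (∫ s in (0:ℝ)..v, abs (f s - f 0)) = -∫ s in v..(0:ℝ), abs (f s - f 0) :=
        intervalIntegral.integral_symm v 0
      rw [hsymm, abs_neg,
        abs_of_nonneg (intervalIntegral.integral_nonneg hv (fun s _ => abs_nonneg _))]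
      calc ∫ s in v..(0:ℝ), abs (f s - f 0)
          ≤ ∫ s in v..(0:ℝ), c * (-s) := by
            apply intervalIntegral.integral_mono_on hv
              (hcont.abs.intervalIntegrable _ _)
              ((continuous_const.mul continuous_id.neg).intervalIntegrable _ _)
            intro s hs
            calc abs (f s - f 0) ≤ c * |s| := hb s
            _ = c * (-s) := by rw [abs_of_nonpos hs.2]
        _ = c / 2 * v ^ 2 := by
            rw [intervalIntegral.integral_const_mul, intervalIntegral.integral_neg, integral_id]
            ring
  calc |Fi f v| ≤ |∫ s in (0:ℝ)..v, abs (f s - f 0)| := by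
        simpa [Real.norm_eq_abs, Fi] using
          intervalIntegral.norm_integral_le_abs_integral_norm
            (f := fun s => f s - f 0) (a := 0) (b := v) (μ := volume)
    _ ≤ c / 2 * v ^ 2 := key

lemma integrable_decay (A : ℝ) : Integrable (fun x : ℝ => A / (1 + x ^ 2)) := by
  simpa [div_eq_mul_inv] using integrable_inv_one_add_sq.const_mul A

lemma integrable_of_decay {h : ℝ → ℝ} (hcont : Continuous h) {A : ℝ}
    (hb : ∀ x, |h x| ≤ A / (1 + x ^ 2)) : Integrable h :=
  (integrable_decay A).mono' hcont.aestronglyMeasurable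
    (Filter.Eventually.of_forall fun x => by
      rw [Real.norm_eq_abs]
      exact hb x)

lemma tendsto_decay_atTop (A : ℝ) :
    Tendsto (fun x : ℝ => A / (1 + x ^ 2)) atTop (nhds 0) := by
  apply Tendsto.div_atTop (tendsto_const_nhds)
  exact tendsto_atTop_add_const_left _ 1 (tendsto_pow_atTop (two_ne_zero))

lemma tendsto_decay_atBot (A : ℝ) :
    Tendsto (fun x : ℝ => A / (1 + x ^ 2)) atBot (nhds 0) := by
  apply Tendsto.div_atTop (tendsto_const_nhds)
  apply tendsto_atTop_add_const_left _ 1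
  have : Tendsto (fun x : ℝ => (-x) ^ 2) atBot atTop :=
    (tendsto_pow_atTop two_ne_zero).comp tendsto_neg_atBot_atTop
  exact this.congr (fun x => neg_sq x)

lemma tendsto_zero_of_decay {h : ℝ → ℝ} {A : ℝ} (hb : ∀ x, |h x| ≤ A / (1 + x ^ 2)) :
    Tendsto h atTop (nhds 0) ∧ Tendsto h atBot (nhds 0) :=
  ⟨squeeze_zero_norm (fun x => by rw [Real.norm_eq_abs]; exact hb x) (tendsto_decay_atTop A),
   squeeze_zero_norm (fun x => by rw [Real.norm_eq_abs]; exact hb x) (tendsto_decay_atBot A)⟩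

lemma abs_mul_le'' {a b A B : ℝ} (h1 : |a| ≤ A) (h2 : |b| ≤ B) : |a * b| ≤ A * B := by
  rw [abs_mul]
  exact mul_le_mul h1 h2 (abs_nonneg _) (le_trans (abs_nonneg _) h1)

lemma abs_sq_le {a A B : ℝ} (h1 : |a| ≤ A) (h2 : |a| ≤ B) : |a ^ 2| ≤ A * B := by
  rw [pow_two]; exact abs_mul_le'' h1 h2

lemma sq_le_of_abs {a A B : ℝ} (h1 : |a| ≤ A) (h2 : |a| ≤ B) : a ^ 2 ≤ A * B :=
  (le_abs_self _).trans (abs_sq_le h1 h2)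

lemma abs_const_mul_le {k : ℝ} (hk : 0 ≤ k) {a A : ℝ} (h : |a| ≤ A) : |k * a| ≤ k * A := by
  rw [abs_mul, abs_of_nonneg hk]; exact mul_le_mul_of_nonneg_left h hk

/-- product bound helper -/
lemma abs_mul_le' {a b A B : ℝ} (h1 : |a| ≤ A) (h2 : |b| ≤ B) : |a * b| ≤ A * B := by
  rw [abs_mul]
  exact mul_le_mul h1 h2 (abs_nonneg _) (le_trans (abs_nonneg _) h1)

end Stmt5Aux
open MeasureTheory Filter Set Stmt5Aux

set_option maxHeartbeats 2000000 in
theorem stmt5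
    (f : ℝ → ℝ) (hf : ContDiff ℝ (⊤ : ℕ∞) f)
    (c : ℝ) (hc : ∀ v : ℝ, |deriv f v| ≤ c)
    (ε δ : ℝ) (hε : 0 < ε) (hδ : 0 < δ)
    (u : ℝ → ℝ → ℝ) (u₀ : ℝ → ℝ)
    (hu : ContDiff ℝ (⊤ : ℕ∞) (fun p : ℝ × ℝ => u p.1 p.2))
    (hu₀s : ContDiff ℝ (⊤ : ℕ∞) u₀)
    (hpde : ∀ t ≥ (0:ℝ), ∀ x : ℝ,
      deriv (fun s => u s x) t + deriv (fun y => f (u t y)) x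
        = ε * iteratedDeriv 2 (u t) x + δ * iteratedDeriv 3 (u t) x)
    (hinit : u 0 = u₀)
    (hu₀L2 : MemLp u₀ 2 volume)
    (hu₀'L2 : MemLp (deriv u₀) 2 volume)
    (hdecay : ∀ (n m : ℕ) (T : ℝ), ∃ C : ℝ, ∀ t ∈ Set.Icc (0:ℝ) T, ∀ x : ℝ,
      |x| ^ m * |iteratedDeriv n (u t) x| ≤ C)
    (t : ℝ) (ht : 0 ≤ t) :
    δ * (∫ x : ℝ, (deriv (u t) x) ^ 2)
      ≤ 2 * c * (∫ x : ℝ, (u₀ x) ^ 2) + δ * ∫ x : ℝ, (deriv u₀ x) ^ 2 := by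
  have hgg : ContDiff ℝ (⊤ : ℕ∞) (gg u) := hu
  have hc0 : 0 ≤ c := le_trans (abs_nonneg _) (hc 0)
  have hderivt : ∀ s : ℝ, (fun x => (deriv (u s) x) ^ 2) = fun x => (Dn u 1 (s, x)) ^ 2 := by
    intro s; funext x
    rw [← iteratedDeriv_one, iteratedDeriv_eq_Dn hgg 1 s x]
  have hu₀eq : (fun x => (u₀ x) ^ 2) = fun x => (gg u (0, x)) ^ 2 := by
    funext x; rw [show gg u (0, x) = u 0 x from rfl, hinit]
  have hu₀'eq : (fun x => (deriv u₀ x) ^ 2) = fun x => (Dn u 1 (0, x)) ^ 2 := by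
    rw [← hinit, hderivt 0]
  rcases eq_or_lt_of_le ht with rfl | htpos
  · -- t = 0 : trivial
    have h2 : (0:ℝ) ≤ ∫ x : ℝ, (u₀ x) ^ 2 := integral_nonneg fun x => sq_nonneg _
    have h3 : (∫ x : ℝ, (deriv (u 0) x) ^ 2) = ∫ x : ℝ, (deriv u₀ x) ^ 2 := by
      rw [hinit]
    rw [h3]
    nlinarith [mul_nonneg hc0 h2]
  -- ============ main case 0 < t ============
  obtain ⟨K0, hK0n, hK0⟩ := Dn_decay hgg hdecay 0 t
  obtain ⟨K1, hK1n, hK1⟩ := Dn_decay hgg hdecay 1 t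
  obtain ⟨K2, hK2n, hK2⟩ := Dn_decay hgg hdecay 2 t
  obtain ⟨K3, hK3n, hK3⟩ := Dn_decay hgg hdecay 3 t
  obtain ⟨K4, hK4n, hK4⟩ := Dn_decay hgg hdecay 4 t
  obtain ⟨C2, hC2⟩ : ∃ C2 : ℝ, ∀ v : ℝ, |v| ≤ K0 → |deriv (deriv f) v| ≤ C2 := by
    have hdc : Continuous (deriv (deriv f)) := by
      have h2 : ContDiff ℝ ((⊤ : ℕ∞) : WithTop ℕ∞) (deriv (deriv f)) := by
        have := ContDiff.iterate_deriv 2 (hf.of_le (by simp))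
        simpa [Function.iterate_succ, Function.comp] using this
      exact h2.continuous
    obtain ⟨C2, hC2⟩ := (isCompact_Icc (a := -K0) (b := K0)).exists_bound_of_continuousOn
      hdc.continuousOn
    exact ⟨C2, fun v hv => by
      simpa [Real.norm_eq_abs] using hC2 v (abs_le.1 hv)⟩
  have hWb : ∀ v : ℝ, |f v - f 0| ≤ c * |v| := fun v => by
    simpa using abs_f_sub_le hf hc v 0
  -- continuity facts
  have cg : Continuous (gg u) := hgg.continuous
  have cD : ∀ n, Continuous (Dn u n) := fun n => (Dn_contDiff hgg n).continuous
  have cE1 : Continuous (E1 u) := (E1_contDiff hgg).continuous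
  have cDt1 : Continuous (Dt1 u) := (Dt1_contDiff hgg).continuous
  have hdFi : Differentiable ℝ (Fi f) := fun v => (hasDerivAt_Fi hf.continuous v).differentiableAt
  have cFi : Continuous (Fi f) := hdFi.continuous
  have cdf : Continuous (deriv f) := hf.continuous_deriv (by exact_mod_cast le_top)
  have habsδ : |δ| ≤ δ := le_of_eq (abs_of_pos hδ)
  ----------------------------------------------------------------
  -- pointwise bounds on the strip
  ----------------------------------------------------------------
  set Aen : ℝ := δ/2 * (K1*K1) + c/2*(K0*K0) + c/2*(K0*K0) with hAen_def
  have hb_en : ∀ s ∈ Set.Icc (0:ℝ) t, ∀ x : ℝ, |en f c δ u s x| ≤ Aen / (1 + x^2) := by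
    intro s hs x
    have hx : (0:ℝ) < 1 + x^2 := by positivity
    obtain ⟨h1u, h1d⟩ := hK1 s hs x
    obtain ⟨h0u, h0d⟩ := hK0 s hs x
    have e1 : |δ/2 * (Dn u 1 (s,x))^2| ≤ δ/2 * (K1*(K1/(1+x^2))) :=
      abs_const_mul_le (by positivity) (abs_sq_le h1u h1d)
    have e2 : |Fi f (gg u (s,x))| ≤ c/2 * (K0*(K0/(1+x^2))) :=
      (abs_Fi_le hf hc _).trans
        (mul_le_mul_of_nonneg_left (sq_le_of_abs h0u h0d) (by positivity))
    have e3 : |c/2 * (gg u (s,x))^2| ≤ c/2 * (K0*(K0/(1+x^2))) :=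
      abs_const_mul_le (by positivity) (abs_sq_le h0u h0d)
    have hsum : Aen / (1+x^2)
        = δ/2 * (K1*(K1/(1+x^2))) + c/2 * (K0*(K0/(1+x^2))) + c/2 * (K0*(K0/(1+x^2))) := by
      rw [hAen_def]; ring
    obtain ⟨l1, r1⟩ := abs_le.1 e1
    obtain ⟨l2, r2⟩ := abs_le.1 e2
    obtain ⟨l3, r3⟩ := abs_le.1 e3
    have : en f c δ u s x
        = δ/2 * (Dn u 1 (s,x))^2 + Fi f (gg u (s,x)) + c/2 * (gg u (s,x))^2 := rfl
    rw [this]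
    exact abs_le.2 ⟨by linarith, by linarith⟩
  set AE1 : ℝ := c*K1 + ε*K2 + δ*K3 with hAE1_def
  have hb_E1 : ∀ s ∈ Set.Icc (0:ℝ) t, ∀ x : ℝ, |E1 u (s,x)| ≤ AE1 / (1 + x^2) := by
    intro s hs x
    have hx : (0:ℝ) < 1 + x^2 := by positivity
    obtain ⟨h1u, h1d⟩ := hK1 s hs x
    obtain ⟨h2u, h2d⟩ := hK2 s hs x
    obtain ⟨h3u, h3d⟩ := hK3 s hs x
    rw [pde_E1 hf hgg hpde hs.1 x]
    have e1 : |deriv f (gg u (s,x)) * Dn u 1 (s,x)| ≤ c * (K1/(1+x^2)) :=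
      abs_mul_le'' (hc _) h1d
    have e2 : |ε * Dn u 2 (s,x)| ≤ ε * (K2/(1+x^2)) := abs_const_mul_le hε.le h2d
    have e3 : |δ * Dn u 3 (s,x)| ≤ δ * (K3/(1+x^2)) := abs_const_mul_le hδ.le h3d
    have hsum : AE1 / (1+x^2)
        = c * (K1/(1+x^2)) + ε * (K2/(1+x^2)) + δ * (K3/(1+x^2)) := by
      rw [hAE1_def]; ring
    obtain ⟨l1, r1⟩ := abs_le.1 e1
    obtain ⟨l2, r2⟩ := abs_le.1 e2
    obtain ⟨l3, r3⟩ := abs_le.1 e3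
    exact abs_le.2 ⟨by linarith, by linarith⟩
  set ADt : ℝ := C2*(K1*K1) + c*K2 + ε*K3 + δ*K4 with hADt_def
  have hb_Dt1 : ∀ s ∈ Set.Icc (0:ℝ) t, ∀ x : ℝ, |Dt1 u (s,x)| ≤ ADt := by
    intro s hs x
    obtain ⟨h0u, h0d⟩ := hK0 s hs x
    obtain ⟨h1u, h1d⟩ := hK1 s hs x
    obtain ⟨h2u, h2d⟩ := hK2 s hs x
    obtain ⟨h3u, h3d⟩ := hK3 s hs x
    obtain ⟨h4u, h4d⟩ := hK4 s hs x
    rw [Dt1_eq hf hgg hpde hs.1 x]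
    have e1 : |deriv (deriv f) (gg u (s,x)) * (Dn u 1 (s,x))^2| ≤ C2 * (K1*K1) :=
      abs_mul_le'' (hC2 _ h0u) (abs_sq_le h1u h1u)
    have e2 : |deriv f (gg u (s,x)) * Dn u 2 (s,x)| ≤ c * K2 := abs_mul_le'' (hc _) h2u
    have e3 : |ε * Dn u 3 (s,x)| ≤ ε * K3 := abs_const_mul_le hε.le h3u
    have e4 : |δ * Dn u 4 (s,x)| ≤ δ * K4 := abs_const_mul_le hδ.le h4u
    obtain ⟨l1, r1⟩ := abs_le.1 e1
    obtain ⟨l2, r2⟩ := abs_le.1 e2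
    obtain ⟨l3, r3⟩ := abs_le.1 e3
    obtain ⟨l4, r4⟩ := abs_le.1 e4
    rw [hADt_def]
    exact abs_le.2 ⟨by linarith, by linarith⟩
  set AeT : ℝ := δ*K1*ADt + (c*K0 + c*K0)*AE1 with hAeT_def
  have hb_eT : ∀ s ∈ Set.Icc (0:ℝ) t, ∀ x : ℝ, |eT f c δ u s x| ≤ AeT / (1 + x^2) := by
    intro s hs x
    have hx : (0:ℝ) < 1 + x^2 := by positivity
    obtain ⟨h0u, h0d⟩ := hK0 s hs x
    obtain ⟨h1u, h1d⟩ := hK1 s hs x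
    have e1 : |δ * Dn u 1 (s,x) * Dt1 u (s,x)| ≤ δ * (K1/(1+x^2)) * ADt :=
      abs_mul_le'' (abs_mul_le'' habsδ h1d) (hb_Dt1 s hs x)
    have ew : |f (gg u (s,x)) - f 0 + c * gg u (s,x)| ≤ c*K0 + c*K0 :=
      (abs_add_le _ _).trans
        (add_le_add ((hWb _).trans (mul_le_mul_of_nonneg_left h0u hc0))
          (abs_const_mul_le hc0 h0u))
    have e2 : |(f (gg u (s,x)) - f 0 + c * gg u (s,x)) * E1 u (s,x)|
        ≤ (c*K0 + c*K0) * (AE1/(1+x^2)) := abs_mul_le'' ew (hb_E1 s hs x)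
    have hsum : AeT / (1+x^2)
        = δ * (K1/(1+x^2)) * ADt + (c*K0 + c*K0) * (AE1/(1+x^2)) := by
      rw [hAeT_def]; ring
    obtain ⟨l1, r1⟩ := abs_le.1 e1
    obtain ⟨l2, r2⟩ := abs_le.1 e2
    have : eT f c δ u s x = δ * Dn u 1 (s,x) * Dt1 u (s,x)
        + (f (gg u (s,x)) - f 0 + c * gg u (s,x)) * E1 u (s,x) := rfl
    rw [this]
    exact abs_le.2 ⟨by linarith, by linarith⟩
  set ADd : ℝ := ε*δ*(K2*K2) + ε*(c+c)*(K1*K1) with hADd_def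
  have hb_Dd : ∀ s ∈ Set.Icc (0:ℝ) t, ∀ x : ℝ, |Dd f c ε δ u s x| ≤ ADd / (1 + x^2) := by
    intro s hs x
    have hx : (0:ℝ) < 1 + x^2 := by positivity
    obtain ⟨h1u, h1d⟩ := hK1 s hs x
    obtain ⟨h2u, h2d⟩ := hK2 s hs x
    have e1 : |ε*δ*(Dn u 2 (s,x))^2| ≤ ε*δ*(K2*(K2/(1+x^2))) :=
      abs_const_mul_le (by positivity) (abs_sq_le h2u h2d)
    have ew : |ε*(deriv f (gg u (s,x)) + c)| ≤ ε*(c+c) := by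
      refine abs_const_mul_le hε.le ?_
      exact (abs_add_le _ _).trans (add_le_add (hc _) (le_of_eq (abs_of_nonneg hc0)))
    have e2 : |ε*(deriv f (gg u (s,x)) + c)*(Dn u 1 (s,x))^2|
        ≤ ε*(c+c)*(K1*(K1/(1+x^2))) := abs_mul_le'' ew (abs_sq_le h1u h1d)
    have hsum : ADd / (1+x^2)
        = ε*δ*(K2*(K2/(1+x^2))) + ε*(c+c)*(K1*(K1/(1+x^2))) := by
      rw [hADd_def]; ring
    obtain ⟨l1, r1⟩ := abs_le.1 e1
    obtain ⟨l2, r2⟩ := abs_le.1 e2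
    have : Dd f c ε δ u s x
        = ε*δ*(Dn u 2 (s,x))^2 + ε*(deriv f (gg u (s,x)) + c)*(Dn u 1 (s,x))^2 := rfl
    rw [this]
    exact abs_le.2 ⟨by linarith, by linarith⟩
  set AJ : ℝ := δ*c*(K1*K1) + ε*δ*K1*K2 + δ^2*K1*K3 + δ^2/2*(K2*K2)
      + (c*K0)*(c*K0)/2 + ε*(c*K0)*K1 + δ*(c*K0)*K2
      + c*(K0*(c*K0) + c/2*(K0*K0)) + c*ε*K0*K1 + c*δ*K0*K2 + c*δ/2*(K1*K1) with hAJ_def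
  have hb_JJ : ∀ s ∈ Set.Icc (0:ℝ) t, ∀ x : ℝ, |JJ f c ε δ u s x| ≤ AJ / (1 + x^2) := by
    intro s hs x
    have hx : (0:ℝ) < 1 + x^2 := by positivity
    obtain ⟨h0u, h0d⟩ := hK0 s hs x
    obtain ⟨h1u, h1d⟩ := hK1 s hs x
    obtain ⟨h2u, h2d⟩ := hK2 s hs x
    obtain ⟨h3u, h3d⟩ := hK3 s hs x
    have hWu : |f (gg u (s,x)) - f 0| ≤ c*K0 :=
      (hWb _).trans (mul_le_mul_of_nonneg_left h0u hc0)
    have hWd : |f (gg u (s,x)) - f 0| ≤ c*(K0/(1+x^2)) :=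
      (hWb _).trans (mul_le_mul_of_nonneg_left h0d hc0)
    have e1 : |δ * deriv f (gg u (s,x)) * (Dn u 1 (s,x))^2| ≤ δ*c*(K1*(K1/(1+x^2))) :=
      abs_mul_le'' (abs_mul_le'' habsδ (hc _)) (abs_sq_le h1u h1d)
    have e2 : |ε*δ*Dn u 1 (s,x)*Dn u 2 (s,x)| ≤ ε*δ*K1*(K2/(1+x^2)) :=
      abs_mul_le'' (abs_const_mul_le (by positivity) h1u) h2d
    have e3 : |δ^2 * Dn u 1 (s,x) * Dn u 3 (s,x)| ≤ δ^2*K1*(K3/(1+x^2)) :=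
      abs_mul_le'' (abs_const_mul_le (by positivity) h1u) h3d
    have e4 : |δ^2/2*(Dn u 2 (s,x))^2| ≤ δ^2/2*(K2*(K2/(1+x^2))) :=
      abs_const_mul_le (by positivity) (abs_sq_le h2u h2d)
    have e5 : |(f (gg u (s,x)) - f 0)^2/2| ≤ (c*K0)*(c*(K0/(1+x^2)))/2 := by
      rw [abs_div, abs_two]
      have := abs_sq_le hWu hWd
      linarith
    have e6 : |ε*(f (gg u (s,x)) - f 0)*Dn u 1 (s,x)| ≤ ε*(c*K0)*(K1/(1+x^2)) :=
      abs_mul_le'' (abs_const_mul_le hε.le hWu) h1d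
    have e7 : |δ*(f (gg u (s,x)) - f 0)*Dn u 2 (s,x)| ≤ δ*(c*K0)*(K2/(1+x^2)) :=
      abs_mul_le'' (abs_const_mul_le hδ.le hWu) h2d
    have e8 : |c*(gg u (s,x)*(f (gg u (s,x)) - f 0) - Fi f (gg u (s,x)))|
        ≤ c*(K0*(c*(K0/(1+x^2))) + c/2*(K0*(K0/(1+x^2)))) := by
      refine abs_const_mul_le hc0 ?_
      rw [sub_eq_add_neg]
      refine (abs_add_le _ _).trans ?_
      rw [abs_neg]
      refine add_le_add (abs_mul_le'' h0u hWd) ?_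
      exact (abs_Fi_le hf hc _).trans
        (mul_le_mul_of_nonneg_left (sq_le_of_abs h0u h0d) (by positivity))
    have e9 : |c*ε*gg u (s,x)*Dn u 1 (s,x)| ≤ c*ε*K0*(K1/(1+x^2)) :=
      abs_mul_le'' (abs_const_mul_le (by positivity) h0u) h1d
    have e10 : |c*δ*gg u (s,x)*Dn u 2 (s,x)| ≤ c*δ*K0*(K2/(1+x^2)) :=
      abs_mul_le'' (abs_const_mul_le (by positivity) h0u) h2d
    have e11 : |c*δ/2*(Dn u 1 (s,x))^2| ≤ c*δ/2*(K1*(K1/(1+x^2))) :=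
      abs_const_mul_le (by positivity) (abs_sq_le h1u h1d)
    have hsum : AJ / (1+x^2)
        = δ*c*(K1*(K1/(1+x^2))) + ε*δ*K1*(K2/(1+x^2)) + δ^2*K1*(K3/(1+x^2))
          + δ^2/2*(K2*(K2/(1+x^2))) + (c*K0)*(c*(K0/(1+x^2)))/2
          + ε*(c*K0)*(K1/(1+x^2)) + δ*(c*K0)*(K2/(1+x^2))
          + c*(K0*(c*(K0/(1+x^2))) + c/2*(K0*(K0/(1+x^2))))
          + c*ε*K0*(K1/(1+x^2)) + c*δ*K0*(K2/(1+x^2)) + c*δ/2*(K1*(K1/(1+x^2))) := by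
      rw [hAJ_def]; ring
    obtain ⟨l1, r1⟩ := abs_le.1 e1
    obtain ⟨l2, r2⟩ := abs_le.1 e2
    obtain ⟨l3, r3⟩ := abs_le.1 e3
    obtain ⟨l4, r4⟩ := abs_le.1 e4
    obtain ⟨l5, r5⟩ := abs_le.1 e5
    obtain ⟨l6, r6⟩ := abs_le.1 e6
    obtain ⟨l7, r7⟩ := abs_le.1 e7
    obtain ⟨l8, r8⟩ := abs_le.1 e8
    obtain ⟨l9, r9⟩ := abs_le.1 e9
    obtain ⟨l10, r10⟩ := abs_le.1 e10
    obtain ⟨l11, r11⟩ := abs_le.1 e11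
    have hJJrfl : JJ f c ε δ u s x =
      -(δ * deriv f (gg u (s,x)) * (Dn u 1 (s,x))^2) + ε*δ*Dn u 1 (s,x)*Dn u 2 (s,x)
      + δ^2 * Dn u 1 (s,x) * Dn u 3 (s,x) - δ^2/2*(Dn u 2 (s,x))^2
      - (f (gg u (s,x)) - f 0)^2/2 + ε*(f (gg u (s,x)) - f 0)*Dn u 1 (s,x)
      + δ*(f (gg u (s,x)) - f 0)*Dn u 2 (s,x)
      - c*(gg u (s,x)*(f (gg u (s,x)) - f 0) - Fi f (gg u (s,x)))
      + c*ε*gg u (s,x)*Dn u 1 (s,x) + c*δ*gg u (s,x)*Dn u 2 (s,x)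
      - c*δ/2*(Dn u 1 (s,x))^2 := rfl
    rw [hJJrfl]
    exact abs_le.2 ⟨by linarith, by linarith⟩
  ----------------------------------------------------------------
  -- continuity in x and in s, integrability
  ----------------------------------------------------------------
  have cx : ∀ s : ℝ, Continuous (fun x : ℝ => ((s, x) : ℝ × ℝ)) :=
    fun s => continuous_const.prodMk continuous_id
  have cxs : ∀ x : ℝ, Continuous (fun σ : ℝ => ((σ, x) : ℝ × ℝ)) :=
    fun x => continuous_id.prodMk continuous_const
  have cen_x : ∀ s : ℝ, Continuous (fun x => en f c δ u s x) := by
    intro s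
    have h1 : Continuous fun x : ℝ => Dn u 1 (s, x) := (cD 1).comp (cx s)
    have h0 : Continuous fun x : ℝ => gg u (s, x) := cg.comp (cx s)
    have hFi2 : Continuous fun x : ℝ => Fi f (gg u (s, x)) := cFi.comp h0
    exact ((continuous_const.mul (h1.pow 2)).add hFi2).add (continuous_const.mul (h0.pow 2))
  have cen_s : ∀ x : ℝ, Continuous (fun σ => en f c δ u σ x) := by
    intro x
    have h1 : Continuous fun σ : ℝ => Dn u 1 (σ, x) := (cD 1).comp (cxs x)
    have h0 : Continuous fun σ : ℝ => gg u (σ, x) := cg.comp (cxs x)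
    have hFi2 : Continuous fun σ : ℝ => Fi f (gg u (σ, x)) := cFi.comp h0
    exact ((continuous_const.mul (h1.pow 2)).add hFi2).add (continuous_const.mul (h0.pow 2))
  have ceT_x : ∀ s : ℝ, Continuous (fun x => eT f c δ u s x) := by
    intro s
    have h1 : Continuous fun x : ℝ => Dn u 1 (s, x) := (cD 1).comp (cx s)
    have h0 : Continuous fun x : ℝ => gg u (s, x) := cg.comp (cx s)
    have hDt : Continuous fun x : ℝ => Dt1 u (s, x) := cDt1.comp (cx s)
    have hE : Continuous fun x : ℝ => E1 u (s, x) := cE1.comp (cx s)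
    have hfg : Continuous fun x : ℝ => f (gg u (s, x)) := hf.continuous.comp h0
    exact ((continuous_const.mul h1).mul hDt).add
      (((hfg.sub continuous_const).add (continuous_const.mul h0)).mul hE)
  have cDd_x : ∀ s : ℝ, Continuous (fun x => Dd f c ε δ u s x) := by
    intro s
    have h1 : Continuous fun x : ℝ => Dn u 1 (s, x) := (cD 1).comp (cx s)
    have h2 : Continuous fun x : ℝ => Dn u 2 (s, x) := (cD 2).comp (cx s)
    have h0 : Continuous fun x : ℝ => gg u (s, x) := cg.comp (cx s)
    have hdfg : Continuous fun x : ℝ => deriv f (gg u (s, x)) := cdf.comp h0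
    exact (continuous_const.mul (h2.pow 2)).add
      ((continuous_const.mul (hdfg.add continuous_const)).mul (h1.pow 2))
  have Ien : ∀ s ∈ Set.Icc (0:ℝ) t, Integrable (fun x => en f c δ u s x) :=
    fun s hs => integrable_of_decay (cen_x s) (hb_en s hs)
  have IeT : ∀ s ∈ Set.Icc (0:ℝ) t, Integrable (fun x => eT f c δ u s x) :=
    fun s hs => integrable_of_decay (ceT_x s) (hb_eT s hs)
  have IDd : ∀ s ∈ Set.Icc (0:ℝ) t, Integrable (fun x => Dd f c ε δ u s x) :=
    fun s hs => integrable_of_decay (cDd_x s) (hb_Dd s hs)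
  have I1 : ∀ s ∈ Set.Icc (0:ℝ) t, Integrable (fun x => (Dn u 1 (s,x))^2) := by
    intro s hs
    have hcn : Continuous fun x : ℝ => (Dn u 1 (s,x))^2 := (((cD 1).comp (cx s) : Continuous fun x : ℝ => Dn u 1 (s, x))).pow 2
    refine integrable_of_decay hcn (A := K1*K1) (fun x => ?_)
    obtain ⟨h1u, h1d⟩ := hK1 s hs x
    rw [mul_div_assoc]
    exact abs_sq_le h1u h1d
  have I0 : ∀ s ∈ Set.Icc (0:ℝ) t, Integrable (fun x => (gg u (s,x))^2) := by
    intro s hs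
    have hcn : Continuous fun x : ℝ => (gg u (s,x))^2 := ((cg.comp (cx s) : Continuous fun x : ℝ => gg u (s, x))).pow 2
    refine integrable_of_decay hcn (A := K0*K0) (fun x => ?_)
    obtain ⟨h0u, h0d⟩ := hK0 s hs x
    rw [mul_div_assoc]
    exact abs_sq_le h0u h0d
  have I2 : ∀ s ∈ Set.Icc (0:ℝ) t,
      Integrable (fun x => Fi f (gg u (s,x)) + c/2*(gg u (s,x))^2) := by
    intro s hs
    have h0 : Continuous fun x : ℝ => gg u (s, x) := cg.comp (cx s)
    have hcn : Continuous fun x : ℝ => Fi f (gg u (s,x)) + c/2*(gg u (s,x))^2 :=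
      (cFi.comp h0).add (continuous_const.mul (h0.pow 2))
    refine integrable_of_decay hcn (A := c*(K0*K0)) (fun x => ?_)
    obtain ⟨h0u, h0d⟩ := hK0 s hs x
    have e2 : |Fi f (gg u (s,x))| ≤ c/2 * (K0*(K0/(1+x^2))) :=
      (abs_Fi_le hf hc _).trans
        (mul_le_mul_of_nonneg_left (sq_le_of_abs h0u h0d) (by positivity))
    have e3 : |c/2 * (gg u (s,x))^2| ≤ c/2 * (K0*(K0/(1+x^2))) :=
      abs_const_mul_le (by positivity) (abs_sq_le h0u h0d)
    refine ((abs_add_le _ _).trans (add_le_add e2 e3)).trans (le_of_eq ?_)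
    ring
  ----------------------------------------------------------------
  -- Step A : continuity of the energy on [0, t]
  ----------------------------------------------------------------
  have hEcont : ContinuousOn (fun s => ∫ x : ℝ, en f c δ u s x) (Set.Icc (0:ℝ) t) := by
    apply continuousOn_of_dominated (bound := fun x => Aen/(1+x^2))
    · exact fun s _ => (cen_x s).aestronglyMeasurable
    · intro s hs
      exact Eventually.of_forall fun x => by
        rw [Real.norm_eq_abs]; exact hb_en s hs x
    · exact integrable_decay Aen
    · exact Eventually.of_forall fun x => (cen_s x).continuousOn
  ----------------------------------------------------------------
  -- Step B : differentiability of the energy on (0, t)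
  ----------------------------------------------------------------
  have hEderiv : ∀ s ∈ Set.Ioo (0:ℝ) t,
      HasDerivAt (fun σ => ∫ x : ℝ, en f c δ u σ x) (∫ x : ℝ, eT f c δ u s x) s := by
    intro s hs
    have hr : 0 < min s (t - s) := lt_min hs.1 (sub_pos.2 hs.2)
    have hball : Metric.ball s (min s (t - s)) ⊆ Set.Icc (0:ℝ) t := by
      intro σ hσ
      rw [Metric.mem_ball, Real.dist_eq] at hσ
      obtain ⟨ha, hb⟩ := abs_lt.1 hσ
      have h1 : min s (t - s) ≤ s := min_le_left _ _
      have h2 : min s (t - s) ≤ t - s := min_le_right _ _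
      exact ⟨by linarith, by linarith⟩
    have key := hasDerivAt_integral_of_dominated_loc_of_deriv_le (μ := volume)
      (F := fun σ x => en f c δ u σ x) (F' := fun σ x => eT f c δ u σ x) (x₀ := s)
      (bound := fun x => AeT/(1+x^2)) (Metric.ball_mem_nhds s hr)
      (Eventually.of_forall fun σ => (cen_x σ).aestronglyMeasurable)
      (Ien s ⟨hs.1.le, hs.2.le⟩)
      ((ceT_x s).aestronglyMeasurable)
      (Eventually.of_forall fun x σ hσ => by
        rw [Real.norm_eq_abs]; exact hb_eT σ (hball hσ) x)
      (integrable_decay AeT)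
      (Eventually.of_forall fun x σ hσ => hasDerivAt_time_en hf hgg σ x)
    exact key.2
  ----------------------------------------------------------------
  -- Step C : the derivative of the energy is nonpositive on (0, t)
  ----------------------------------------------------------------
  have hDd_nonneg : ∀ s x : ℝ, 0 ≤ Dd f c ε δ u s x := by
    intro s x
    have h1 := (abs_le.1 (hc (gg u (s,x)))).1
    have hrfl : Dd f c ε δ u s x
        = ε*δ*(Dn u 2 (s,x))^2 + ε*(deriv f (gg u (s,x)) + c)*(Dn u 1 (s,x))^2 := rfl
    rw [hrfl]
    have h2 : 0 ≤ ε*(deriv f (gg u (s,x)) + c)*(Dn u 1 (s,x))^2 :=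
      mul_nonneg (mul_nonneg hε.le (by linarith)) (sq_nonneg _)
    have h3 : 0 ≤ ε*δ*(Dn u 2 (s,x))^2 := by positivity
    linarith
  have hC : ∀ s ∈ Set.Ioo (0:ℝ) t, (∫ x : ℝ, eT f c δ u s x) ≤ 0 := by
    intro s hs
    have hs' : s ∈ Set.Icc (0:ℝ) t := ⟨hs.1.le, hs.2.le⟩
    have hint : Integrable (fun x => eT f c δ u s x + Dd f c ε δ u s x) :=
      (IeT s hs').add (IDd s hs')
    obtain ⟨htop, hbot⟩ := tendsto_zero_of_decay (hb_JJ s hs')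
    have hder : ∀ x : ℝ, HasDerivAt (fun y => JJ f c ε δ u s y)
        (eT f c δ u s x + Dd f c ε δ u s x) x :=
      fun x => hasDerivAt_x_JJ hf hgg hpde hs.1.le x
    have hIoi : (∫ x in Set.Ioi (0:ℝ), (eT f c δ u s x + Dd f c ε δ u s x))
        = 0 - JJ f c ε δ u s 0 :=
      integral_Ioi_of_hasDerivAt_of_tendsto' (fun x _ => hder x) hint.integrableOn htop
    have hIic : (∫ x in Set.Iic (0:ℝ), (eT f c δ u s x + Dd f c ε δ u s x))
        = JJ f c ε δ u s 0 - 0 :=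
      integral_Iic_of_hasDerivAt_of_tendsto' (fun x _ => hder x) hint.integrableOn hbot
    have htot : (∫ x : ℝ, (eT f c δ u s x + Dd f c ε δ u s x)) = 0 := by
      rw [← intervalIntegral.integral_Iic_add_Ioi hint.integrableOn hint.integrableOn, hIoi, hIic]
      ring
    rw [integral_add (IeT s hs') (IDd s hs')] at htot
    have hDd0 : 0 ≤ ∫ x : ℝ, Dd f c ε δ u s x :=
      integral_nonneg fun x => hDd_nonneg s x
    linarith
  ----------------------------------------------------------------
  -- Step D : the energy is antitone on [0, t]
  ----------------------------------------------------------------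
  have hanti : AntitoneOn (fun s => ∫ x : ℝ, en f c δ u s x) (Set.Icc (0:ℝ) t) := by
    apply antitoneOn_of_deriv_nonpos (convex_Icc 0 t) hEcont
    · intro s hs
      rw [interior_Icc] at hs
      exact (hEderiv s hs).differentiableAt.differentiableWithinAt
    · intro s hs
      rw [interior_Icc] at hs
      rw [(hEderiv s hs).deriv]
      exact hC s hs
  have hmem0 : (0:ℝ) ∈ Set.Icc (0:ℝ) t := ⟨le_rfl, ht⟩
  have hmemt : t ∈ Set.Icc (0:ℝ) t := ⟨ht, le_rfl⟩
  have hEtE0 : (∫ x : ℝ, en f c δ u t x) ≤ ∫ x : ℝ, en f c δ u 0 x := hanti hmem0 hmemt ht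
  ----------------------------------------------------------------
  -- final algebra
  ----------------------------------------------------------------
  have hsplit : ∀ s ∈ Set.Icc (0:ℝ) t, (∫ x : ℝ, en f c δ u s x)
      = δ/2 * (∫ x : ℝ, (Dn u 1 (s,x))^2)
        + ∫ x : ℝ, (Fi f (gg u (s,x)) + c/2*(gg u (s,x))^2) := by
    intro s hs
    have h1 : (fun x => en f c δ u s x)
        = fun x => δ/2*(Dn u 1 (s,x))^2 + (Fi f (gg u (s,x)) + c/2*(gg u (s,x))^2) := by
      funext x
      show δ/2 * (Dn u 1 (s,x))^2 + Fi f (gg u (s,x)) + c/2 * (gg u (s,x))^2 = _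
      ring
    rw [h1, integral_add ((I1 s hs).const_mul (δ/2)) (I2 s hs), integral_const_mul]
  have hGpos : 0 ≤ ∫ x : ℝ, (Fi f (gg u (t,x)) + c/2*(gg u (t,x))^2) := by
    refine integral_nonneg fun x => ?_
    have := (abs_le.1 (abs_Fi_le hf hc (gg u (t,x)))).1
    simp only [Pi.zero_apply]
    linarith
  have hG0 : (∫ x : ℝ, (Fi f (gg u (0,x)) + c/2*(gg u (0,x))^2))
      ≤ ∫ x : ℝ, c * (gg u (0,x))^2 := by
    refine integral_mono (I2 0 hmem0) ((I0 0 hmem0).const_mul c) fun x => ?_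
    have := (abs_le.1 (abs_Fi_le hf hc (gg u (0,x)))).2
    simp only []
    linarith
  have hCmul : (∫ x : ℝ, c * (gg u (0,x))^2) = c * ∫ x : ℝ, (gg u (0,x))^2 :=
    integral_const_mul c _
  have hst := hsplit t hmemt
  have hs0 := hsplit 0 hmem0
  rw [show (∫ x : ℝ, (deriv (u t) x)^2) = ∫ x : ℝ, (Dn u 1 (t,x))^2 by rw [hderivt t],
    show (∫ x : ℝ, (u₀ x)^2) = ∫ x : ℝ, (gg u (0,x))^2 by rw [hu₀eq],
    show (∫ x : ℝ, (deriv u₀ x)^2) = ∫ x : ℝ, (Dn u 1 (0,x))^2 by rw [hu₀'eq]]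
  linarith
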